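/- arXiv:2504.09237 — 2 statements merged into one kernel-verified Lean document; each statement's English description precedes it below -/
import Mathlib

section
/- For any nonzero positive semi-definite matrix Σ, defining ρ₂(Σ²) := tr(Σ²)²/tr(Σ⁴) and ρ₃(Σ) := tr(Σ²)³/tr(Σ³)², one has √ρ₃(Σ) ≤ ρ₂(Σ²) ≤ ρ₃(Σ). -/
/-!
In an eigenbasis `tr(Σᵏ) = ∑ λᵢᵏ`. The upper bound is Cauchy–Schwarz,
`(∑ λᵢ³)² ≤ ∑ λᵢ² · ∑ λᵢ⁴`. For the lower bound, every `λᵢ ≤ √(∑ λⱼ²)`, so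
`∑ λᵢ⁴ ≤ √(∑ λⱼ²) · ∑ λᵢ³`, i.e. `(∑ λᵢ⁴)² ≤ ∑ λᵢ² · (∑ λᵢ³)²`. Both ratio inequalities are
rearrangements of these two moment inequalities.
-/

open Finset

theorem Matrix.IsHermitian.trace_pow_eq_sum_eigenvalues_pow {𝕜 n : Type*} [RCLike 𝕜]
    [Fintype n] [DecidableEq n] {A : Matrix n n 𝕜} (hA : A.IsHermitian) (k : ℕ) :
    (A ^ k).trace = ∑ i, (hA.eigenvalues i : 𝕜) ^ k := by
  conv_lhs => rw [hA.spectral_theorem, ← map_pow, Unitary.conjStarAlgAut_apply,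
    Matrix.trace_mul_cycle, Unitary.coe_star_mul_self, one_mul, diagonal_pow, trace_diagonal]
  rfl

section Moments

variable {ι : Type*}

theorem sq_sum_pow_add_le (s : Finset ι) (f : ι → ℝ) (m n : ℕ) :
    (∑ i ∈ s, f i ^ (m + n)) ^ 2 ≤ (∑ i ∈ s, f i ^ (2 * m)) * ∑ i ∈ s, f i ^ (2 * n) := by
  simpa only [← pow_add, pow_mul'] using sum_mul_sq_le_sq_mul_sq s (f · ^ m) (f · ^ n)

theorem le_sqrt_sum_sq {s : Finset ι} (f : ι → ℝ) {i : ι} (hi : i ∈ s) : f i ≤ √(∑ j ∈ s, f j ^ 2) :=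
  Real.le_sqrt_of_sq_le (single_le_sum (fun j _ ↦ sq_nonneg (f j)) hi)

theorem sq_sum_pow_succ_le {s : Finset ι} {f : ι → ℝ} (hf : ∀ i ∈ s, 0 ≤ f i) (n : ℕ) :
    (∑ i ∈ s, f i ^ (n + 1)) ^ 2 ≤ (∑ i ∈ s, f i ^ 2) * (∑ i ∈ s, f i ^ n) ^ 2 := by
  have hsum : ∑ i ∈ s, f i ^ (n + 1) ≤ √(∑ i ∈ s, f i ^ 2) * ∑ i ∈ s, f i ^ n := by
    rw [mul_sum]
    refine sum_le_sum fun i hi ↦ ?_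
    rw [pow_succ']
    exact mul_le_mul_of_nonneg_right (le_sqrt_sum_sq f hi) (pow_nonneg (hf i hi) n)
  calc (∑ i ∈ s, f i ^ (n + 1)) ^ 2 ≤ (√(∑ i ∈ s, f i ^ 2) * ∑ i ∈ s, f i ^ n) ^ 2 :=
        pow_le_pow_left₀ (sum_nonneg fun i hi ↦ pow_nonneg (hf i hi) _) hsum 2
    _ = (∑ i ∈ s, f i ^ 2) * (∑ i ∈ s, f i ^ n) ^ 2 := by
        rw [mul_pow, Real.sq_sqrt (sum_nonneg fun i _ ↦ sq_nonneg (f i))]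

end Moments

theorem sqrt_cube_div_sq_le_sq_div_le_cube_div_sq {a b c : ℝ} (hbc : b ^ 2 ≤ a * c)
    (hcb : c ^ 2 ≤ a * b ^ 2) :
    √(a ^ 3 / b ^ 2) ≤ a ^ 2 / c ∧ a ^ 2 / c ≤ a ^ 3 / b ^ 2 := by
  rcases lt_trichotomy c 0 with hc | rfl | hc
  · have ha : 0 < a := pos_of_mul_pos_left (by nlinarith) (sq_nonneg b)
    nlinarith [mul_neg_of_pos_of_neg ha hc, sq_nonneg b]
  · -- `b = 0` too, and all three quotients are `0` by the convention `x / 0 = 0`.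
    obtain rfl : b = 0 := by nlinarith
    simp
  · have hab : 0 < a * b ^ 2 := by nlinarith
    have hb : 0 < b ^ 2 := pos_of_mul_pos_right hab (by nlinarith)
    have ha : 0 < a := pos_of_mul_pos_left hab hb.le
    rw [Real.sqrt_le_iff, div_pow, ← pow_mul, div_le_div_iff₀ hb (by positivity),
      div_le_div_iff₀ hc hb]
    refine ⟨⟨by positivity, ?_⟩, ?_⟩
    · exact (mul_le_mul_of_nonneg_left hcb (pow_nonneg ha.le 3)).trans_eq (by ring)
    · exact (mul_le_mul_of_nonneg_left hbc (pow_nonneg ha.le 2)).trans_eq (by ring)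

theorem stmt_2_general {d : ℕ} (A : Matrix (Fin d) (Fin d) ℝ)
    (hA : A.PosSemidef) :
    Real.sqrt (((A ^ 2).trace) ^ 3 / ((A ^ 3).trace) ^ 2)
        ≤ ((A ^ 2).trace) ^ 2 / (A ^ 4).trace ∧
      ((A ^ 2).trace) ^ 2 / (A ^ 4).trace
        ≤ ((A ^ 2).trace) ^ 3 / ((A ^ 3).trace) ^ 2 := by
  have htrace (k : ℕ) : (A ^ k).trace = ∑ i, hA.1.eigenvalues i ^ k := by
    simpa using hA.1.trace_pow_eq_sum_eigenvalues_pow k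
  have hnonneg : ∀ i ∈ univ, 0 ≤ hA.1.eigenvalues i := fun i _ ↦ hA.eigenvalues_nonneg i
  simp only [htrace]
  exact sqrt_cube_div_sq_le_sq_div_le_cube_div_sq (sq_sum_pow_add_le _ _ 1 2)
    (sq_sum_pow_succ_le hnonneg 3)

/-- For any nonzero positive semi-definite matrix `Σ`, with
`ρ₂(Σ²) := tr(Σ²)²/tr(Σ⁴)` and `ρ₃(Σ) := tr(Σ²)³/tr(Σ³)²`, one has
`√ρ₃(Σ) ≤ ρ₂(Σ²) ≤ ρ₃(Σ)`. -/
theorem stmt_2 {d : ℕ} (A : Matrix (Fin d) (Fin d) ℝ)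
    (hA : A.PosSemidef) (hA0 : A ≠ 0) :
    Real.sqrt (((A ^ 2).trace) ^ 3 / ((A ^ 3).trace) ^ 2)
        ≤ ((A ^ 2).trace) ^ 2 / (A ^ 4).trace ∧
      ((A ^ 2).trace) ^ 2 / (A ^ 4).trace
        ≤ ((A ^ 2).trace) ^ 3 / ((A ^ 3).trace) ^ 2 :=
  stmt_2_general A hA
end

section
/- For any nonzero positive semi-definite Σ ∈ ℝ^{d×d}, ρ₁(Σ)²/d ≤ ρ₃(Σ) ≤ ρ₁(Σ)^{3/2}, where ρ₁(Σ) := tr(Σ)/‖Σ‖_op and ρ₃(Σ) := tr(Σ²)³/tr(Σ³)². -/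
/-!
Both bounds are inequalities between power sums `s₁, s₂, s₃` of the eigenvalues and the top
eigenvalue `m`, since `tr(Σᵏ) = sₖ` and `‖Σ‖_op = m`. The lower bound combines
`s₁² ≤ d s₂` (Cauchy–Schwarz) with `s₃ ≤ m s₂`; the upper bound combines `s₂² ≤ s₁ s₃`
(Cauchy–Schwarz for `√λ` and `λ^{3/2}`) with `m³ ≤ s₃`, which give `ρ₃² ≤ ρ₁³`.
-/

open Finset

namespace Matrix.IsHermitian

variable {𝕜 n : Type*} [RCLike 𝕜] [Fintype n] [DecidableEq n] {A : Matrix n n 𝕜}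

theorem trace_pow_eq_sum_eigenvalues_pow_s3 (hA : A.IsHermitian) (k : ℕ) :
    (A ^ k).trace = ∑ i, (hA.eigenvalues i : 𝕜) ^ k := by
  conv_lhs => rw [hA.spectral_theorem, ← map_pow, Unitary.conjStarAlgAut_apply, trace_mul_cycle,
    Unitary.coe_star_mul_self, one_mul, diagonal_pow, trace_diagonal]
  rfl

end Matrix.IsHermitian

section SpectralRatios

variable {ι : Type*} [Fintype ι] {μ : ι → ℝ}

/-- `ρ₁` and `ρ₃` of a spectrum `μ`; `m` stands for the top eigenvalue `‖Σ‖_op`. -/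
noncomputable def rho₁ (μ : ι → ℝ) (m : ℝ) : ℝ := (∑ i, μ i) / m

noncomputable def rho₃ (μ : ι → ℝ) : ℝ := (∑ i, μ i ^ 2) ^ 3 / (∑ i, μ i ^ 3) ^ 2

theorem sum_pow_succ_le_sum_pow_mul (hμ : ∀ i, 0 ≤ μ i) {m : ℝ} (hm : ∀ i, μ i ≤ m) (k : ℕ) :
    ∑ i, μ i ^ (k + 1) ≤ (∑ i, μ i ^ k) * m := by
  rw [sum_mul]
  gcongr with i
  rw [pow_succ]
  exact mul_le_mul_of_nonneg_left (hm i) (pow_nonneg (hμ i) k)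

theorem sq_sum_sq_le_sum_mul_sum_pow_three (hμ : ∀ i, 0 ≤ μ i) :
    (∑ i, μ i ^ 2) ^ 2 ≤ (∑ i, μ i) * ∑ i, μ i ^ 3 :=
  sum_sq_le_sum_mul_sum_of_sq_le_mul _ (fun i _ ↦ hμ i) (fun i _ ↦ pow_nonneg (hμ i) 3)
    (fun i _ ↦ le_of_eq (by ring))

theorem sq_rho₁_div_card_le_rho₃ (hμ : ∀ i, 0 ≤ μ i) {j : ι} (hj : ∀ i, μ i ≤ μ j)
    (hj₀ : 0 < μ j) : rho₁ μ (μ j) ^ 2 / Fintype.card ι ≤ rho₃ μ := by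
  have hcube : ∑ i, μ i ^ 3 ≤ (∑ i, μ i ^ 2) * μ j := sum_pow_succ_le_sum_pow_mul hμ hj 2
  have hcard : (∑ i, μ i) ^ 2 ≤ Fintype.card ι * ∑ i, μ i ^ 2 := by
    simpa using sq_sum_le_card_mul_sum_sq (s := univ) (f := μ)
  have hcube₀ : 0 < ∑ i, μ i ^ 3 :=
    (pow_pos hj₀ 3).trans_le (single_le_sum (fun i _ ↦ pow_nonneg (hμ i) 3) (mem_univ j))
  have hsq₀ : 0 < ∑ i, μ i ^ 2 := by nlinarith
  have hι : (0 : ℝ) < Fintype.card ι := Nat.cast_pos.mpr (Fintype.card_pos_iff.mpr ⟨j⟩)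
  unfold rho₁ rho₃
  rw [div_pow, div_div, div_le_div_iff₀ (by positivity) (by positivity)]
  calc (∑ i, μ i) ^ 2 * (∑ i, μ i ^ 3) ^ 2
      ≤ (Fintype.card ι * ∑ i, μ i ^ 2) * ((∑ i, μ i ^ 2) * μ j) ^ 2 := by gcongr
    _ = (∑ i, μ i ^ 2) ^ 3 * (μ j ^ 2 * Fintype.card ι) := by ring

theorem rho₃_le_rho₁_rpow (hμ : ∀ i, 0 ≤ μ i) {j : ι} (hj₀ : 0 < μ j) :
    rho₃ μ ≤ rho₁ μ (μ j) ^ ((3 : ℝ) / 2) := by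
  have hmax : μ j ^ 3 ≤ ∑ i, μ i ^ 3 := single_le_sum (fun i _ ↦ pow_nonneg (hμ i) 3) (mem_univ j)
  have hcs := sq_sum_sq_le_sum_mul_sum_pow_three hμ
  have hcube₀ : 0 < ∑ i, μ i ^ 3 := (pow_pos hj₀ 3).trans_le hmax
  have hρ₁ : 0 ≤ rho₁ μ (μ j) := div_nonneg (sum_nonneg fun i _ ↦ hμ i) hj₀.le
  have hsq : rho₃ μ ^ 2 ≤ rho₁ μ (μ j) ^ 3 := by
    unfold rho₁ rho₃
    rw [div_pow, div_pow, div_le_div_iff₀ (by positivity) (by positivity)]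
    calc ((∑ i, μ i ^ 2) ^ 3) ^ 2 * μ j ^ 3 = ((∑ i, μ i ^ 2) ^ 2) ^ 3 * μ j ^ 3 := by ring
      _ ≤ ((∑ i, μ i) * ∑ i, μ i ^ 3) ^ 3 * ∑ i, μ i ^ 3 := by
        gcongr
        exact pow_nonneg (hcs.trans' (sq_nonneg _)) 3
      _ = (∑ i, μ i) ^ 3 * ((∑ i, μ i ^ 3) ^ 2) ^ 2 := by ring
  have hsqrt : rho₁ μ (μ j) ^ ((3 : ℝ) / 2) = √(rho₁ μ (μ j) ^ 3) := by
    rw [Real.sqrt_eq_rpow, ← Real.rpow_natCast_mul hρ₁]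
    norm_num
  rw [hsqrt]
  exact (le_abs_self _).trans (Real.abs_le_sqrt hsq)

end SpectralRatios

/-- For any nonzero positive semi-definite `Σ ∈ ℝ^{d×d}`,
`ρ₁(Σ)²/d ≤ ρ₃(Σ) ≤ ρ₁(Σ)^{3/2}`, where `ρ₁(Σ) := tr(Σ)/‖Σ‖_op` (the operator
norm being the largest eigenvalue) and `ρ₃(Σ) := tr(Σ²)³/tr(Σ³)²`. -/
theorem stmt_3 {d : ℕ} (A : Matrix (Fin d) (Fin d) ℝ)
    (hA : A.PosSemidef) (hA0 : A ≠ 0) :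
    (A.trace / (⨆ i, hA.isHermitian.eigenvalues i)) ^ 2 / (d : ℝ)
        ≤ ((A ^ 2).trace) ^ 3 / ((A ^ 3).trace) ^ 2 ∧
      ((A ^ 2).trace) ^ 3 / ((A ^ 3).trace) ^ 2
        ≤ (A.trace / (⨆ i, hA.isHermitian.eigenvalues i)) ^ ((3 : ℝ) / 2) := by
  set μ := hA.isHermitian.eigenvalues
  have hμ : ∀ i, 0 ≤ μ i := hA.eigenvalues_nonneg
  obtain ⟨i₀, hi₀⟩ : ∃ i, μ i ≠ 0 :=
    Function.ne_iff.mp (hA.isHermitian.eigenvalues_eq_zero_iff.not.mpr hA0)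
  have : Nonempty (Fin d) := ⟨i₀⟩
  obtain ⟨j, hj⟩ := exists_eq_ciSup_of_finite (f := μ)
  have hmax : ∀ i, μ i ≤ μ j := fun i ↦ hj ▸ le_ciSup (Finite.bddAbove_range μ) i
  have hj₀ : 0 < μ j := ((hμ i₀).lt_of_ne' hi₀).trans_le (hmax i₀)
  have htrace : A.trace = ∑ i, μ i := by simpa using hA.isHermitian.trace_eq_sum_eigenvalues
  simp only [htrace, hA.isHermitian.trace_pow_eq_sum_eigenvalues_pow_s3, ← hj]
  have hlower := sq_rho₁_div_card_le_rho₃ hμ hmax hj₀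
  rw [Fintype.card_fin] at hlower
  exact ⟨hlower, rho₃_le_rho₁_rpow hμ hj₀⟩
end
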